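/- arXiv:2507.15360 — 2 statements merged into one kernel-verified Lean document; each statement's English description precedes it below -/
import Mathlib

section
/- Given smooth h' : ℝ → ℝ with h'(t) > 0 for all t, constants a, b with b ≠ 0, and λ⋆ ∈ ℝ, there exists a smooth function f : ℝ → ℝ such that a·(n-2)·(h''² - h'·h''') + b·h'·(f''·h' - f'·h'') = λ⋆·a holds on all of ℝ. -/
open scoped ContDiff ENNReal NNReal
open Set

/-- The primitive of a continuous function has the function as derivative. -/
lemma primitive_hasDerivAt {F : ℝ → ℝ} (hF : Continuous F) (x : ℝ) :
    HasDerivAt (fun t => ∫ s in (0:ℝ)..t, F s) (F x) x :=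
  intervalIntegral.integral_hasDerivAt_right (hF.intervalIntegrable _ _)
    (hF.stronglyMeasurableAtFilter _ _) hF.continuousAt

/-- The primitive of an analytic (`C^ω`) function is analytic. -/
lemma contDiff_primitive {F : ℝ → ℝ} (hF : ContDiff ℝ (⊤ : ℕ∞) F) :
    ContDiff ℝ (⊤ : ℕ∞) (fun t => ∫ s in (0:ℝ)..t, F s) ∧
      deriv (fun t => ∫ s in (0:ℝ)..t, F s) = F := by
  have hd := primitive_hasDerivAt hF.continuous
  constructor
  · rw [contDiff_infty_iff_deriv]
    refine ⟨fun x => (hd x).differentiableAt, ?_⟩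
    rw [show deriv (fun t => ∫ s in (0:ℝ)..t, F s) = F from funext fun x => (hd x).deriv]
    exact hF
  · funext x; exact (hd x).deriv

/-- Given a smooth everywhere-positive `h'` (denoted `u`), constants `a`, `b ≠ 0`
and `λ⋆`, there is a smooth `f` solving the warped-product almost-soliton equation
`a(n-2)(h''² - h'h''') + b h'(f''h' - f'h'') = λ⋆ a` on all of `ℝ`. -/
theorem stmt_11 (u : ℝ → ℝ) (hu : ContDiff ℝ (⊤ : ℕ∞) u) (hupos : ∀ t, 0 < u t)
    (a b lamStar : ℝ) (hb : b ≠ 0) (n : ℕ) (hn : 2 ≤ n) :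
    ∃ f : ℝ → ℝ, ContDiff ℝ (⊤ : ℕ∞) f ∧
      ∀ t : ℝ,
        a * ((n : ℝ) - 2) * ((deriv u t) ^ 2 - u t * deriv (deriv u) t)
          + b * u t * (deriv (deriv f) t * u t - deriv f t * deriv u t)
        = lamStar * a := by
  have hune : ∀ t, u t ≠ 0 := fun t => (hupos t).ne'
  have hu' : ContDiff ℝ (⊤ : ℕ∞) (deriv u) := (contDiff_infty_iff_deriv.1 hu).2
  have hu'' : ContDiff ℝ (⊤ : ℕ∞) (deriv (deriv u)) :=
    (contDiff_infty_iff_deriv.1 hu').2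
  set F : ℝ → ℝ := fun t =>
    (lamStar * a - a * ((n : ℝ) - 2) * ((deriv u t) ^ 2 - u t * deriv (deriv u) t))
      / (b * (u t) ^ 3) with hFdef
  have hF : ContDiff ℝ (⊤ : ℕ∞) F := by
    apply ContDiff.div
    · exact contDiff_const.sub (contDiff_const.mul ((hu'.pow 2).sub (hu.mul hu'')))
    · exact contDiff_const.mul (hu.pow 3)
    · intro x; exact mul_ne_zero hb (pow_ne_zero 3 (hune x))
  obtain ⟨hgC, hgd⟩ := contDiff_primitive hF
  set g : ℝ → ℝ := fun t => ∫ s in (0:ℝ)..t, F s with hgdef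
  have hG : ContDiff ℝ (⊤ : ℕ∞) (fun t => u t * g t) := hu.mul hgC
  obtain ⟨hfC, hfd⟩ := contDiff_primitive hG
  refine ⟨fun t => ∫ s in (0:ℝ)..t, u s * g s, hfC, fun t => ?_⟩
  have hderiv_ug : deriv (fun t => u t * g t) t = deriv u t * g t + u t * F t := by
    have h1 : HasDerivAt u (deriv u t) t :=
      (hu.differentiable (by simp) t).hasDerivAt
    have h2 : HasDerivAt g (F t) t := primitive_hasDerivAt hF.continuous t
    exact (h1.mul h2).deriv
  rw [hfd, hderiv_ug]
  simp only
  have hFt : F t * (b * (u t) ^ 3) =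
      lamStar * a - a * ((n : ℝ) - 2) * ((deriv u t) ^ 2 - u t * deriv (deriv u) t) := by
    rw [hFdef]
    field_simp
    rw [mul_comm a (u t), mul_assoc, mul_div_cancel_left₀ _ (hune t)]
  nlinarith [hFt, hune t, sq_nonneg (u t)]
end

section
/- Suppose on an interval h' > 0, f' = C·(h')^{1-n} with C > 0, and (n-2)(h''² - h'h''') + h'(f''h' - f'h'') = 0 with n ≥ 3. Then h'' = B·(h')^{2-n} + D·h' for constants B = nC/((n-1)(n-2)) and some D ∈ ℝ. -/
/-- If on an open interval `h' > 0`, `f' = C(h')^{1-n}` with `C > 0`, and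
`(n-2)(h''² - h'h''') + h'(f''h' - f'h'') = 0` with `n ≥ 3`, then
`h'' = B(h')^{2-n} + D h'` with `B = nC/((n-1)(n-2))` and some constant `D`. -/
theorem stmt_14 (a b : ℝ) (hab : a < b) (n : ℕ) (hn : 3 ≤ n) (h f : ℝ → ℝ)
    (hh : ContDiff ℝ (⊤ : ℕ∞) h) (hf : ContDiff ℝ (⊤ : ℕ∞) f) (C : ℝ) (hC : 0 < C)
    (hpos : ∀ t ∈ Set.Ioo a b, 0 < deriv h t)
    (hfC : ∀ t ∈ Set.Ioo a b, deriv f t = C * (deriv h t) ^ (1 - (n : ℤ)))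
    (hode : ∀ t ∈ Set.Ioo a b,
        ((n : ℝ) - 2) * ((deriv (deriv h) t) ^ 2 - deriv h t * deriv (deriv (deriv h)) t)
          + deriv h t * (deriv (deriv f) t * deriv h t - deriv f t * deriv (deriv h) t) = 0) :
    ∃ D : ℝ, ∀ t ∈ Set.Ioo a b,
      deriv (deriv h) t
        = ((n : ℝ) * C / (((n : ℝ) - 1) * ((n : ℝ) - 2))) * (deriv h t) ^ (2 - (n : ℤ))
          + D * deriv h t := by
  have hh' : ContDiff ℝ (⊤ : ℕ∞) h := hh.of_le (by simp)
  have hh1 : ContDiff ℝ (⊤ : ℕ∞) (deriv h) := (contDiff_infty_iff_deriv.mp hh').2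
  have hh2 : ContDiff ℝ (⊤ : ℕ∞) (deriv (deriv h)) := (contDiff_infty_iff_deriv.mp hh1).2
  set B : ℝ := (n : ℝ) * C / (((n : ℝ) - 1) * ((n : ℝ) - 2)) with hB
  have hn1 : ((n : ℝ) - 1) ≠ 0 := by
    have : (3 : ℝ) ≤ (n : ℝ) := by exact_mod_cast hn
    linarith
  have hn2 : ((n : ℝ) - 2) ≠ 0 := by
    have : (3 : ℝ) ≤ (n : ℝ) := by exact_mod_cast hn
    linarith
  set φ : ℝ → ℝ := fun s =>
    deriv (deriv h) s / deriv h s - B * (deriv h s) ^ (1 - (n : ℤ)) with hφ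
  -- derivative of φ vanishes on the interval
  have hkey : ∀ t ∈ Set.Ioo a b, HasDerivAt φ 0 t := by
    intro t ht
    have hx : 0 < deriv h t := hpos t ht
    set x := deriv h t with hxdef
    set y := deriv (deriv h) t with hydef
    set z := deriv (deriv (deriv h)) t with hzdef
    have hH1 : HasDerivAt (deriv h) y t :=
      (hh1.differentiable (by norm_num) t).hasDerivAt
    have hH2 : HasDerivAt (deriv (deriv h)) z t :=
      (hh2.differentiable (by norm_num) t).hasDerivAt
    have hzp : HasDerivAt (fun s => (deriv h s) ^ (1 - (n : ℤ)))
        (((1 - (n : ℝ)) * x ^ (1 - (n : ℤ) - 1)) * y) t := by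
      have := (hasDerivAt_zpow (1 - (n : ℤ)) x (Or.inl hx.ne')).comp t hH1
      simpa [Function.comp_def] using this
    -- second derivative of f on the interval
    have hf2 : deriv (deriv f) t = C * (((1 - (n : ℝ)) * x ^ (1 - (n : ℤ) - 1)) * y) := by
      have hev : deriv f =ᶠ[nhds t] fun s => C * (deriv h s) ^ (1 - (n : ℤ)) := by
        filter_upwards [isOpen_Ioo.mem_nhds ht] with s hs using hfC s hs
      rw [hev.deriv_eq]
      exact (hzp.const_mul C).deriv
    have hode' := hode t ht
    rw [hf2, hfC t ht] at hode'
    have hdiv : HasDerivAt (fun s => deriv (deriv h) s / deriv h s)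
        ((z * x - y * y) / x ^ 2) t := hH2.div hH1 hx.ne'
    have hφd : HasDerivAt φ
        ((z * x - y * y) / x ^ 2 - B * (((1 - (n : ℝ)) * x ^ (1 - (n : ℤ) - 1)) * y)) t :=
      hdiv.sub (hzp.const_mul B)
    convert hφd using 1
    -- algebra: the value is zero
    have e1 : x ^ (1 - (n : ℤ)) = x / x ^ n := by
      rw [zpow_sub₀ hx.ne', zpow_one, zpow_natCast]
    have e2 : x ^ (1 - (n : ℤ) - 1) = 1 / x ^ n := by
      rw [show (1 - (n : ℤ) - 1) = -(n : ℤ) by ring, zpow_neg, zpow_natCast, one_div]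
    rw [e1, e2] at hode'
    rw [e2, hB]
    have hxn : x ^ n ≠ 0 := pow_ne_zero _ hx.ne'
    field_simp at hode' ⊢
    ring_nf at hode' ⊢
    nlinarith [hode', sq_nonneg x, hx, pow_pos hx n]
  -- φ is constant on the interval
  have ht0 : (a + b) / 2 ∈ Set.Ioo a b := by constructor <;> [linarith; linarith]
  refine ⟨φ ((a + b) / 2), fun t ht => ?_⟩
  have hconst : φ t = φ ((a + b) / 2) := by
    apply (convex_Ioo a b).is_const_of_fderivWithin_eq_zero
      (fun s hs => ((hkey s hs).differentiableAt).differentiableWithinAt)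
      (fun s hs => ?_) ht ht0
    rw [fderivWithin_of_isOpen isOpen_Ioo hs, (hkey s hs).hasFDerivAt.fderiv]
    ext v
    simp
  have hx : 0 < deriv h t := hpos t ht
  have heq : deriv (deriv h) t / deriv h t
      = B * (deriv h t) ^ (1 - (n : ℤ)) + φ ((a + b) / 2) := by
    have := hconst
    simp only [hφ] at this
    linarith
  have h4 : deriv (deriv h) t
      = (B * (deriv h t) ^ (1 - (n : ℤ)) + φ ((a + b) / 2)) * deriv h t :=
    (div_eq_iff hx.ne').mp heq
  have e3 : (deriv h t) ^ (1 - (n : ℤ)) * deriv h t = (deriv h t) ^ (2 - (n : ℤ)) := by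
    rw [← zpow_add_one₀ hx.ne']
    congr 1
    ring
  rw [h4, add_mul, mul_assoc, e3]
end
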